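/- (Proposition 2, part 1.) For any finite alphabets 𝒮, 𝒳₁, 𝒳₂, 𝒴, any state pmf Q_S on 𝒮 and any channel transition kernel W(y|x₁,x₂,s), the outer bound region R^out is a convex subset of ℝ². -/

import Mathlib

open scoped BigOperators
open Classical

noncomputable section

/-- Probability that the random variable `X` equals `x` under the pmf `p`. -/
def pr {Ω α : Type*} [Fintype Ω] (p : Ω → ℝ) (X : Ω → α) (x : α) : ℝ :=
  ∑ ω : Ω, if X ω = x then p ω else 0

/-- Shannon entropy (in bits), with the convention `0 · log₂ 0 = 0`. -/
def ent {Ω α : Type*} [Fintype Ω] (p : Ω → ℝ) (X : Ω → α) : ℝ :=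
  -∑ x ∈ Finset.univ.image X, pr p X x * Real.logb 2 (pr p X x)

/-- Conditional entropy `H(X|Y) = H(X,Y) - H(Y)`. -/
def condEnt {Ω α β : Type*} [Fintype Ω] (p : Ω → ℝ) (X : Ω → α) (Y : Ω → β) : ℝ :=
  ent p (fun ω => (X ω, Y ω)) - ent p Y

/-- Mutual information `I(X;Y) = H(X) + H(Y) - H(X,Y)`. -/
def mi {Ω α β : Type*} [Fintype Ω] (p : Ω → ℝ) (X : Ω → α) (Y : Ω → β) : ℝ :=
  ent p X + ent p Y - ent p (fun ω => (X ω, Y ω))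

/-- Conditional mutual information `I(X;Y|Z) = H(X,Z) + H(Y,Z) - H(X,Y,Z) - H(Z)`. -/
def cmi {Ω α β γ : Type*} [Fintype Ω] (p : Ω → ℝ) (X : Ω → α) (Y : Ω → β) (Z : Ω → γ) : ℝ :=
  ent p (fun ω => (X ω, Z ω)) + ent p (fun ω => (Y ω, Z ω))
    - ent p (fun ω => (X ω, Y ω, Z ω)) - ent p Z

/-- `p` is a probability mass function on the finite sample space `Ω`. -/
def IsPMF {Ω : Type*} [Fintype Ω] (p : Ω → ℝ) : Prop :=
  (∀ ω, 0 ≤ p ω) ∧ ∑ ω : Ω, p ω = 1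

/-- The random variables `X` and `Y` are independent under `p`. -/
def IndepRV {Ω α β : Type*} [Fintype Ω] (p : Ω → ℝ) (X : Ω → α) (Y : Ω → β) : Prop :=
  ∀ x y, pr p (fun ω => (X ω, Y ω)) (x, y) = pr p X x * pr p Y y

end

noncomputable section
/-! The outer bound `R^out` of Theorem 2.  The joint sample space is the product of the
alphabets `𝒮 × 𝒱 × 𝒳₁ × 𝒳₂ × 𝒴`, with the random variables being the coordinate
projections, and the joint pmf having the product form
`Q_S(s)·P_{X₂}(x₂)·P_{X₁|X₂}(x₁|x₂)·P_{V|S,X₁,X₂}(v|s,x₁,x₂)·W(y|x₁,x₂,s)`. -/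

/-- The product-form joint pmf on `𝒮 × 𝒱 × 𝒳₁ × 𝒳₂ × 𝒴`. -/
def jointP {𝒮 𝒱 𝒳₁ 𝒳₂ 𝒴 : Type*}
    (QS : 𝒮 → ℝ) (W : 𝒴 → 𝒳₁ → 𝒳₂ → 𝒮 → ℝ)
    (PX2 : 𝒳₂ → ℝ) (PX12 : 𝒳₁ → 𝒳₂ → ℝ) (PV : 𝒮 → 𝒳₁ → 𝒳₂ → 𝒱 → ℝ) :
    𝒮 × 𝒱 × 𝒳₁ × 𝒳₂ × 𝒴 → ℝ :=
  fun q => QS q.1 * PX2 q.2.2.2.1 * PX12 q.2.2.1 q.2.2.2.1 *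
    PV q.1 q.2.2.1 q.2.2.2.1 q.2.1 * W q.2.2.2.2 q.2.2.1 q.2.2.2.1 q.1

/-- `(Rc, R1)` is witnessed in `R^out` by the auxiliary alphabet `𝒱`. -/
def RoutW {𝒮 𝒳₁ 𝒳₂ 𝒴 : Type*} [Fintype 𝒮] [Fintype 𝒳₁] [Fintype 𝒳₂] [Fintype 𝒴]
    (QS : 𝒮 → ℝ) (W : 𝒴 → 𝒳₁ → 𝒳₂ → 𝒮 → ℝ)
    (𝒱 : Type) [Fintype 𝒱] (Rc R1 : ℝ) : Prop :=
  ∃ (PX2 : 𝒳₂ → ℝ) (PX12 : 𝒳₁ → 𝒳₂ → ℝ) (PV : 𝒮 → 𝒳₁ → 𝒳₂ → 𝒱 → ℝ),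
    (∀ x2, 0 ≤ PX2 x2) ∧ (∑ x2, PX2 x2 = 1) ∧
    (∀ x1 x2, 0 ≤ PX12 x1 x2) ∧ (∀ x2, ∑ x1, PX12 x1 x2 = 1) ∧
    (∀ s x1 x2 v, 0 ≤ PV s x1 x2 v) ∧ (∀ s x1 x2, ∑ v, PV s x1 x2 v = 1) ∧
    (0 ≤ mi (jointP QS W PX2 PX12 PV) (fun q => (q.2.1, q.2.2.2.1)) (fun q => q.2.2.2.2)
          - mi (jointP QS W PX2 PX12 PV) (fun q => (q.2.1, q.2.2.2.1)) (fun q => q.1)) ∧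
    (R1 ≤ cmi (jointP QS W PX2 PX12 PV) (fun q => q.2.2.1) (fun q => q.2.2.2.2)
            (fun q => (q.2.1, q.2.2.2.1))) ∧
    (Rc + R1 ≤
      mi (jointP QS W PX2 PX12 PV) (fun q => (q.2.1, q.2.2.1, q.2.2.2.1)) (fun q => q.2.2.2.2)
        - mi (jointP QS W PX2 PX12 PV) (fun q => (q.2.1, q.2.2.1, q.2.2.2.1)) (fun q => q.1))

/-- The outer bound `R^out` as a subset of `ℝ²`. -/
def Rout {𝒮 𝒳₁ 𝒳₂ 𝒴 : Type*} [Fintype 𝒮] [Fintype 𝒳₁] [Fintype 𝒳₂] [Fintype 𝒴]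
    (QS : 𝒮 → ℝ) (W : 𝒴 → 𝒳₁ → 𝒳₂ → 𝒮 → ℝ) : Set (ℝ × ℝ) :=
  {R | 0 ≤ R.1 ∧ 0 ≤ R.2 ∧ ∃ (𝒱 : Type) (_ : Fintype 𝒱), RoutW QS W 𝒱 R.1 R.2}

end

/-!
Time sharing. Given witnesses for `(Rc₁, R₁)` on `𝒱₁` and for `(Rc₂, R₂)` on `𝒱₂` and weights
`a + b = 1`, let the auxiliary variable take values in `𝒱₁ ⊕ 𝒱₂` and record the branch: the input
laws are the `(a, b)`-mixtures of the two, and `V` is drawn from the posterior of the branch given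
`(X₁, X₂)`, then from that branch's kernel. The joint pmf becomes the disjoint mixture of `a • p₁`
and `b • p₂`. The entropy of any tuple containing `V` is then the average of the branch entropies
plus the entropy of `(a, b)`, which cancels in every constraint; `H(S)` does not change since both
branches have `S`-marginal `Q_S`, and `H(Y)` can only grow by concavity. So all three constraints
survive averaging.
-/

open Finset Real

section Entropy

variable {Ω Ω' α : Type*} [Fintype Ω] [Fintype Ω'] {p : Ω → ℝ}

lemma pr_nonneg (hp : ∀ ω, 0 ≤ p ω) (X : Ω → α) (x : α) : 0 ≤ pr p X x :=
  sum_nonneg fun ω _ => by split_ifs <;> simp [hp]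

lemma sum_pr [Fintype α] (p : Ω → ℝ) (X : Ω → α) : ∑ x, pr p X x = ∑ ω, p ω := by
  simp only [pr]
  rw [sum_comm]
  simp

lemma pr_eq_zero_of_forall_ne {X : Ω → α} {x : α} (p : Ω → ℝ) (h : ∀ ω, X ω ≠ x) :
    pr p X x = 0 :=
  sum_eq_zero fun ω _ => if_neg (h ω)

lemma pr_comp_equiv (e : Ω' ≃ Ω) (p : Ω → ℝ) (X : Ω → α) (x : α) :
    pr (p ∘ e) (X ∘ e) x = pr p X x :=
  e.sum_comp fun ω => if X ω = x then p ω else 0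

lemma ent_eq_sum_negMulLog [Fintype α] (p : Ω → ℝ) (X : Ω → α) :
    ent p X = (∑ x, negMulLog (pr p X x)) / log 2 := by
  have hzero : ∀ x ∉ univ.image X, pr p X x = 0 := fun x hx =>
    sum_eq_zero fun ω _ => if_neg fun h => hx (mem_image.2 ⟨ω, mem_univ ω, h⟩)
  rw [ent, ← sum_subset (subset_univ (univ.image X)) fun x _ hx => by simp [hzero x hx],
    sum_div, ← sum_neg_distrib]
  refine sum_congr rfl fun x _ => ?_
  rw [negMulLog, logb]
  ring

lemma ent_eq_sum_fiber (p : Ω → ℝ) (X : Ω → α) :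
    ent p X = -∑ ω, p ω * logb 2 (pr p X (X ω)) := by
  rw [ent, ← sum_fiberwise_of_maps_to (s := univ) (t := univ.image X) (g := X)
    fun ω _ => mem_image_of_mem X (mem_univ ω)]
  congr 1
  refine sum_congr rfl fun x _ => ?_
  rw [sum_filter, pr, sum_mul]
  exact sum_congr rfl fun ω _ => by split_ifs with h <;> simp [h, pr]

lemma ent_congr_of_eq_iff {β : Type*} {X : Ω → α} {Y : Ω → β}
    (h : ∀ ω ω', X ω = X ω' ↔ Y ω = Y ω') : ent p X = ent p Y := by
  have hpr : ∀ ω, pr p X (X ω) = pr p Y (Y ω) := fun ω =>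
    sum_congr rfl fun ω' _ => by rw [h]
  simp only [ent_eq_sum_fiber, hpr]

end Entropy

section Mixture

variable {Ω₁ Ω₂ Ω γ : Type*} [Fintype Ω₁] [Fintype Ω₂] [Fintype Ω] {e : Ω₁ ⊕ Ω₂ ≃ Ω}
  {p : Ω₁ → ℝ} {q : Ω₂ → ℝ} {m : Ω → ℝ} {a b : ℝ}

lemma pr_of_mixture (hm : m ∘ e = Sum.elim (a • p) (b • q)) (Z : Ω → γ) (x : γ) :
    pr m Z x = a * pr p (Z ∘ e ∘ .inl) x + b * pr q (Z ∘ e ∘ .inr) x := by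
  rw [← pr_comp_equiv e, hm, pr, Fintype.sum_sum_type, pr, pr, mul_sum, mul_sum]
  congr 1 <;> exact sum_congr rfl fun ω _ => by split_ifs <;> simp_all

lemma ent_of_mixture_ge [Fintype γ] (hm : m ∘ e = Sum.elim (a • p) (b • q))
    (hp : ∀ ω, 0 ≤ p ω) (hq : ∀ ω, 0 ≤ q ω) (ha : 0 ≤ a) (hb : 0 ≤ b) (hab : a + b = 1)
    (Z : Ω → γ) :
    a * ent p (Z ∘ e ∘ .inl) + b * ent q (Z ∘ e ∘ .inr) ≤ ent m Z := by
  simp only [ent_eq_sum_negMulLog, pr_of_mixture hm, mul_div_assoc', ← add_div, mul_sum,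
    ← sum_add_distrib]
  refine div_le_div_of_nonneg_right (sum_le_sum fun x _ => ?_) (log_pos one_lt_two).le
  exact concaveOn_negMulLog.2 (Set.mem_Ici.2 (pr_nonneg hp _ x))
    (Set.mem_Ici.2 (pr_nonneg hq _ x)) ha hb hab

/-- The extra term is the entropy of the mixing weights `(a, b)`. -/
lemma ent_of_mixture_of_disjoint [Fintype γ] (hm : m ∘ e = Sum.elim (a • p) (b • q))
    (hp : ∑ ω, p ω = 1) (hq : ∑ ω, q ω = 1) (Z : Ω → γ)
    (hZ : ∀ ω₁ ω₂, Z (e (.inl ω₁)) ≠ Z (e (.inr ω₂))) :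
    ent m Z = a * ent p (Z ∘ e ∘ .inl) + b * ent q (Z ∘ e ∘ .inr)
      + (negMulLog a + negMulLog b) / log 2 := by
  have hpoint : ∀ x, negMulLog (pr m Z x)
      = a * negMulLog (pr p (Z ∘ e ∘ .inl) x) + b * negMulLog (pr q (Z ∘ e ∘ .inr) x)
        + (pr p (Z ∘ e ∘ .inl) x * negMulLog a + pr q (Z ∘ e ∘ .inr) x * negMulLog b) := by
    intro x
    have hsplit : pr p (Z ∘ e ∘ .inl) x = 0 ∨ pr q (Z ∘ e ∘ .inr) x = 0 := by
      by_cases h : ∃ ω₁, Z (e (.inl ω₁)) = x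
      · obtain ⟨ω₁, rfl⟩ := h
        exact .inr (pr_eq_zero_of_forall_ne q fun ω₂ => (hZ ω₁ ω₂).symm)
      · exact .inl (pr_eq_zero_of_forall_ne p fun ω₁ h' => h ⟨ω₁, h'⟩)
    rw [pr_of_mixture hm]
    rcases hsplit with h | h <;>
      simp only [h, mul_zero, zero_add, add_zero, negMulLog_mul, negMulLog_zero] <;> ring
  simp only [ent_eq_sum_negMulLog, hpoint, sum_add_distrib, ← mul_sum, ← sum_mul, sum_pr,
    hp, hq]
  ring

end Mixture

section Information

variable {Ω α β γ γ' : Type*} [Fintype Ω] {p : Ω → ℝ}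

lemma mi_congr_left_of_eq_iff {U : Ω → γ} {U' : Ω → γ'} (hU : ∀ ω ω', U ω = U ω' ↔ U' ω = U' ω')
    (Y : Ω → β) : mi p U Y = mi p U' Y := by
  simp only [mi, ent_congr_of_eq_iff hU,
    ent_congr_of_eq_iff (X := fun ω => (U ω, Y ω)) (Y := fun ω => (U' ω, Y ω))
      fun ω ω' => by simp only [Prod.mk.injEq, hU]]

lemma cmi_congr_cond_of_eq_iff {U : Ω → γ} {U' : Ω → γ'} (hU : ∀ ω ω', U ω = U ω' ↔ U' ω = U' ω')
    (A : Ω → α) (B : Ω → β) : cmi p A B U = cmi p A B U' := by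
  simp only [cmi, ent_congr_of_eq_iff hU,
    ent_congr_of_eq_iff (X := fun ω => (A ω, U ω)) (Y := fun ω => (A ω, U' ω))
      fun ω ω' => by simp only [Prod.mk.injEq, hU],
    ent_congr_of_eq_iff (X := fun ω => (B ω, U ω)) (Y := fun ω => (B ω, U' ω))
      fun ω ω' => by simp only [Prod.mk.injEq, hU],
    ent_congr_of_eq_iff (X := fun ω => (A ω, B ω, U ω)) (Y := fun ω => (A ω, B ω, U' ω))
      fun ω ω' => by simp only [Prod.mk.injEq, hU]]

end Information

section MixtureInformation

variable {Ω₁ Ω₂ Ω α β γ γ₁ γ₂ : Type*} [Fintype Ω₁] [Fintype Ω₂] [Fintype Ω]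
  [Fintype α] [Fintype β] [Fintype γ] {e : Ω₁ ⊕ Ω₂ ≃ Ω}
  {p : Ω₁ → ℝ} {q : Ω₂ → ℝ} {m : Ω → ℝ} {a b : ℝ}

lemma ent_of_mixture_of_pr_eq (hm : m ∘ e = Sum.elim (a • p) (b • q)) (hab : a + b = 1)
    (S : Ω → α) (hS : ∀ s, pr p (S ∘ e ∘ .inl) s = pr q (S ∘ e ∘ .inr) s) :
    ent m S = a * ent p (S ∘ e ∘ .inl) + b * ent q (S ∘ e ∘ .inr) := by
  have hpr : ∀ s, pr m S s = pr q (S ∘ e ∘ .inr) s := fun s => by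
    rw [pr_of_mixture hm, hS, ← add_mul, hab, one_mul]
  simp only [ent_eq_sum_negMulLog, hpr, hS, ← add_mul, hab, one_mul]

lemma cmi_of_mixture (hm : m ∘ e = Sum.elim (a • p) (b • q))
    (hp : ∑ ω, p ω = 1) (hq : ∑ ω, q ω = 1) (A : Ω → α) (B : Ω → β) (U : Ω → γ)
    (U₁ : Ω₁ → γ₁) (U₂ : Ω₂ → γ₂) (hU : ∀ ω₁ ω₂, U (e (.inl ω₁)) ≠ U (e (.inr ω₂)))
    (hU₁ : ∀ ω ω', U (e (.inl ω)) = U (e (.inl ω')) ↔ U₁ ω = U₁ ω')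
    (hU₂ : ∀ ω ω', U (e (.inr ω)) = U (e (.inr ω')) ↔ U₂ ω = U₂ ω') :
    cmi m A B U = a * cmi p (A ∘ e ∘ .inl) (B ∘ e ∘ .inl) U₁
      + b * cmi q (A ∘ e ∘ .inr) (B ∘ e ∘ .inr) U₂ := by
  rw [← cmi_congr_cond_of_eq_iff hU₁, ← cmi_congr_cond_of_eq_iff hU₂]
  simp only [cmi]
  rw [ent_of_mixture_of_disjoint hm hp hq _ fun ω₁ ω₂ h => hU ω₁ ω₂ (congrArg Prod.snd h),
    ent_of_mixture_of_disjoint hm hp hq _ fun ω₁ ω₂ h => hU ω₁ ω₂ (congrArg Prod.snd h),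
    ent_of_mixture_of_disjoint hm hp hq _ fun ω₁ ω₂ h => hU ω₁ ω₂ (congrArg (·.2.2) h),
    ent_of_mixture_of_disjoint hm hp hq U hU]
  simp only [Function.comp_def]
  ring

lemma mi_sub_mi_of_mixture_ge (hm : m ∘ e = Sum.elim (a • p) (b • q))
    (hp : IsPMF p) (hq : IsPMF q) (ha : 0 ≤ a) (hb : 0 ≤ b) (hab : a + b = 1) (U : Ω → γ) (Y : Ω → β) (S : Ω → α)
    (U₁ : Ω₁ → γ₁) (U₂ : Ω₂ → γ₂) (hU : ∀ ω₁ ω₂, U (e (.inl ω₁)) ≠ U (e (.inr ω₂)))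
    (hU₁ : ∀ ω ω', U (e (.inl ω)) = U (e (.inl ω')) ↔ U₁ ω = U₁ ω')
    (hU₂ : ∀ ω ω', U (e (.inr ω)) = U (e (.inr ω')) ↔ U₂ ω = U₂ ω')
    (hS : ∀ s, pr p (S ∘ e ∘ .inl) s = pr q (S ∘ e ∘ .inr) s) :
    a * (mi p U₁ (Y ∘ e ∘ .inl) - mi p U₁ (S ∘ e ∘ .inl))
      + b * (mi q U₂ (Y ∘ e ∘ .inr) - mi q U₂ (S ∘ e ∘ .inr))
      ≤ mi m U Y - mi m U S := by
  have hY := ent_of_mixture_ge hm hp.1 hq.1 ha hb hab Y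
  rw [← mi_congr_left_of_eq_iff hU₁, ← mi_congr_left_of_eq_iff hU₁,
    ← mi_congr_left_of_eq_iff hU₂, ← mi_congr_left_of_eq_iff hU₂]
  simp only [mi]
  rw [ent_of_mixture_of_pr_eq hm hab S hS,
    ent_of_mixture_of_disjoint hm hp.2 hq.2 _ fun ω₁ ω₂ h => hU ω₁ ω₂ (congrArg Prod.fst h),
    ent_of_mixture_of_disjoint hm hp.2 hq.2 _ fun ω₁ ω₂ h => hU ω₁ ω₂ (congrArg Prod.fst h)]
  simp only [Function.comp_def] at hY ⊢
  linarith

end MixtureInformation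

section JointPMF

variable {𝒮 𝒱 𝒳₁ 𝒳₂ 𝒴 : Type*} {QS : 𝒮 → ℝ} {W : 𝒴 → 𝒳₁ → 𝒳₂ → 𝒮 → ℝ}
  {PX2 : 𝒳₂ → ℝ} {PX12 : 𝒳₁ → 𝒳₂ → ℝ} {PV : 𝒮 → 𝒳₁ → 𝒳₂ → 𝒱 → ℝ}

lemma jointP_nonneg (hQ0 : ∀ s, 0 ≤ QS s) (hW0 : ∀ y x1 x2 s, 0 ≤ W y x1 x2 s)
    (hX2 : ∀ x2, 0 ≤ PX2 x2) (hX12 : ∀ x1 x2, 0 ≤ PX12 x1 x2)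
    (hV : ∀ s x1 x2 v, 0 ≤ PV s x1 x2 v) (ω : 𝒮 × 𝒱 × 𝒳₁ × 𝒳₂ × 𝒴) :
    0 ≤ jointP QS W PX2 PX12 PV ω := by
  obtain ⟨s, v, x1, x2, y⟩ := ω
  have := hQ0 s; have := hW0 y x1 x2 s; have := hX2 x2; have := hX12 x1 x2
  have := hV s x1 x2 v
  unfold jointP
  positivity

lemma pr_jointP_fst [Fintype 𝒮] [Fintype 𝒱] [Fintype 𝒳₁] [Fintype 𝒳₂] [Fintype 𝒴]
    (hX2 : ∑ x2, PX2 x2 = 1) (hX12 : ∀ x2, ∑ x1, PX12 x1 x2 = 1)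
    (hV : ∀ s x1 x2, ∑ v, PV s x1 x2 v = 1) (hW : ∀ x1 x2 s, ∑ y, W y x1 x2 s = 1) (s : 𝒮) :
    pr (jointP QS W PX2 PX12 PV) (fun ω => ω.1) s = QS s := by
  have htail : ∑ v, ∑ x1, ∑ x2, PX2 x2 * (PX12 x1 x2 * PV s x1 x2 v) = 1 := by
    rw [sum_comm, sum_congr rfl fun x1 _ => sum_comm, sum_comm]
    simp only [← mul_sum, hV, mul_one, hX12, hX2]
  rw [pr, Fintype.sum_prod_type, sum_eq_single s (fun s' _ hs' => by simp [hs'])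
    (by simp)]
  simp only [if_true, jointP, Fintype.sum_prod_type, ← mul_sum, hW, mul_one]
  simp only [mul_assoc, ← mul_sum, htail, mul_one]

lemma isPMF_jointP [Fintype 𝒮] [Fintype 𝒱] [Fintype 𝒳₁] [Fintype 𝒳₂] [Fintype 𝒴]
    (hQ0 : ∀ s, 0 ≤ QS s) (hQ1 : ∑ s, QS s = 1)
    (hW0 : ∀ y x1 x2 s, 0 ≤ W y x1 x2 s) (hW1 : ∀ x1 x2 s, ∑ y, W y x1 x2 s = 1)
    (hX2 : ∀ x2, 0 ≤ PX2 x2) (hX2s : ∑ x2, PX2 x2 = 1)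
    (hX12 : ∀ x1 x2, 0 ≤ PX12 x1 x2) (hX12s : ∀ x2, ∑ x1, PX12 x1 x2 = 1)
    (hV : ∀ s x1 x2 v, 0 ≤ PV s x1 x2 v) (hVs : ∀ s x1 x2, ∑ v, PV s x1 x2 v = 1) :
    IsPMF (jointP QS W PX2 PX12 PV) := by
  refine ⟨jointP_nonneg hQ0 hW0 hX2 hX12 hV, ?_⟩
  rw [← sum_pr _ fun ω => ω.1]
  simp only [pr_jointP_fst hX2s hX12s hVs hW1, hQ1]

end JointPMF

/-- A conditional pmf is arbitrary on a null conditioning event; the fallback `c` keeps it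
normalized there. -/
noncomputable def divOr (n d c : ℝ) : ℝ := if d = 0 then c else n / d

section DivOr

variable {n d c : ℝ}

lemma mul_divOr (h : d = 0 → n = 0) : d * divOr n d c = n := by
  unfold divOr
  split_ifs with hd
  · rw [hd, h hd, zero_mul]
  · exact mul_div_cancel₀ n hd

lemma divOr_nonneg (hn : 0 ≤ n) (hd : 0 ≤ d) (hc : 0 ≤ c) : 0 ≤ divOr n d c := by
  unfold divOr
  split_ifs
  exacts [hc, div_nonneg hn hd]

lemma sum_divOr {ι : Type*} [Fintype ι] {f g : ι → ℝ} (hf : ∑ i, f i = d)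
    (hg : ∑ i, g i = 1) : ∑ i, divOr (f i) d (g i) = 1 := by
  unfold divOr
  split_ifs with hd
  · exact hg
  · rw [← sum_div, hf, div_self hd]

lemma divOr_add_divOr {n₁ n₂ c₁ c₂ : ℝ} (hn : n₁ + n₂ = d) (hc : c₁ + c₂ = 1) :
    divOr n₁ d c₁ + divOr n₂ d c₂ = 1 := by
  unfold divOr
  split_ifs with hd
  · exact hc
  · rw [← add_div, hn, div_self hd]

end DivOr

def prodSumProdEquiv (𝒮 𝒱₁ 𝒱₂ R : Type*) :
    (𝒮 × 𝒱₁ × R) ⊕ (𝒮 × 𝒱₂ × R) ≃ 𝒮 × (𝒱₁ ⊕ 𝒱₂) × R :=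
  ((Equiv.prodCongr (Equiv.refl 𝒮) (Equiv.sumProdDistrib 𝒱₁ 𝒱₂ R)).trans
    (Equiv.prodSumDistrib 𝒮 (𝒱₁ × R) (𝒱₂ × R))).symm

@[simp]
lemma prodSumProdEquiv_inl {𝒮 𝒱₁ 𝒱₂ R : Type*} (ω : 𝒮 × 𝒱₁ × R) :
    prodSumProdEquiv 𝒮 𝒱₁ 𝒱₂ R (.inl ω) = (ω.1, .inl ω.2.1, ω.2.2) := rfl

@[simp]
lemma prodSumProdEquiv_inr {𝒮 𝒱₁ 𝒱₂ R : Type*} (ω : 𝒮 × 𝒱₂ × R) :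
    prodSumProdEquiv 𝒮 𝒱₁ 𝒱₂ R (.inr ω) = (ω.1, .inr ω.2.1, ω.2.2) := rfl

section TimeSharing

variable {𝒮 𝒳₁ 𝒳₂ 𝒴 : Type*} {𝒱₁ 𝒱₂ : Type} (a b : ℝ) (P1 P2 : 𝒳₂ → ℝ)
  (Q1 Q2 : 𝒳₁ → 𝒳₂ → ℝ) (R1 : 𝒮 → 𝒳₁ → 𝒳₂ → 𝒱₁ → ℝ) (R2 : 𝒮 → 𝒳₁ → 𝒳₂ → 𝒱₂ → ℝ)

def mixPX2 (x2 : 𝒳₂) : ℝ := a * P1 x2 + b * P2 x2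

def mixPX1X2 (x1 : 𝒳₁) (x2 : 𝒳₂) : ℝ := a * P1 x2 * Q1 x1 x2 + b * P2 x2 * Q2 x1 x2

noncomputable def mixPX12 (x1 : 𝒳₁) (x2 : 𝒳₂) : ℝ :=
  divOr (mixPX1X2 a b P1 P2 Q1 Q2 x1 x2) (mixPX2 a b P1 P2 x2) (Q1 x1 x2)

noncomputable def mixPV (s : 𝒮) (x1 : 𝒳₁) (x2 : 𝒳₂) : 𝒱₁ ⊕ 𝒱₂ → ℝ :=
  Sum.elim
    (fun v => divOr (a * P1 x2 * Q1 x1 x2) (mixPX1X2 a b P1 P2 Q1 Q2 x1 x2) a * R1 s x1 x2 v)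
    (fun v => divOr (b * P2 x2 * Q2 x1 x2) (mixPX1X2 a b P1 P2 Q1 Q2 x1 x2) b * R2 s x1 x2 v)

variable {a b P1 P2 Q1 Q2 R1 R2}

lemma mixPX2_nonneg (ha : 0 ≤ a) (hb : 0 ≤ b) (hP1 : ∀ x2, 0 ≤ P1 x2)
    (hP2 : ∀ x2, 0 ≤ P2 x2) (x2 : 𝒳₂) : 0 ≤ mixPX2 a b P1 P2 x2 := by
  have := hP1 x2; have := hP2 x2
  unfold mixPX2; positivity

lemma mixPX1X2_nonneg (ha : 0 ≤ a) (hb : 0 ≤ b) (hP1 : ∀ x2, 0 ≤ P1 x2)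
    (hP2 : ∀ x2, 0 ≤ P2 x2) (hQ1 : ∀ x1 x2, 0 ≤ Q1 x1 x2) (hQ2 : ∀ x1 x2, 0 ≤ Q2 x1 x2)
    (x1 : 𝒳₁) (x2 : 𝒳₂) : 0 ≤ mixPX1X2 a b P1 P2 Q1 Q2 x1 x2 := by
  have := hP1 x2; have := hP2 x2; have := hQ1 x1 x2; have := hQ2 x1 x2
  unfold mixPX1X2; positivity

lemma mixPX12_nonneg (ha : 0 ≤ a) (hb : 0 ≤ b) (hP1 : ∀ x2, 0 ≤ P1 x2)
    (hP2 : ∀ x2, 0 ≤ P2 x2) (hQ1 : ∀ x1 x2, 0 ≤ Q1 x1 x2) (hQ2 : ∀ x1 x2, 0 ≤ Q2 x1 x2)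
    (x1 : 𝒳₁) (x2 : 𝒳₂) : 0 ≤ mixPX12 a b P1 P2 Q1 Q2 x1 x2 :=
  divOr_nonneg (mixPX1X2_nonneg ha hb hP1 hP2 hQ1 hQ2 x1 x2) (mixPX2_nonneg ha hb hP1 hP2 x2)
    (hQ1 x1 x2)

lemma mixPV_nonneg (ha : 0 ≤ a) (hb : 0 ≤ b) (hP1 : ∀ x2, 0 ≤ P1 x2)
    (hP2 : ∀ x2, 0 ≤ P2 x2) (hQ1 : ∀ x1 x2, 0 ≤ Q1 x1 x2) (hQ2 : ∀ x1 x2, 0 ≤ Q2 x1 x2)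
    (hR1 : ∀ s x1 x2 v, 0 ≤ R1 s x1 x2 v) (hR2 : ∀ s x1 x2 v, 0 ≤ R2 s x1 x2 v)
    (s : 𝒮) (x1 : 𝒳₁) (x2 : 𝒳₂) (v : 𝒱₁ ⊕ 𝒱₂) : 0 ≤ mixPV a b P1 P2 Q1 Q2 R1 R2 s x1 x2 v := by
  have hJ := mixPX1X2_nonneg ha hb hP1 hP2 hQ1 hQ2 x1 x2
  have := hP1 x2; have := hP2 x2; have := hQ1 x1 x2; have := hQ2 x1 x2
  rcases v with v | v
  · exact mul_nonneg (divOr_nonneg (by positivity) hJ ha) (hR1 s x1 x2 v)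
  · exact mul_nonneg (divOr_nonneg (by positivity) hJ hb) (hR2 s x1 x2 v)

lemma mixPX2_sum [Fintype 𝒳₂] (hab : a + b = 1) (hP1 : ∑ x2, P1 x2 = 1)
    (hP2 : ∑ x2, P2 x2 = 1) : ∑ x2, mixPX2 a b P1 P2 x2 = 1 := by
  simp only [mixPX2, sum_add_distrib, ← mul_sum, hP1, hP2, mul_one, hab]

lemma mixPX12_sum [Fintype 𝒳₁] (hQ1 : ∀ x2, ∑ x1, Q1 x1 x2 = 1)
    (hQ2 : ∀ x2, ∑ x1, Q2 x1 x2 = 1) (x2 : 𝒳₂) : ∑ x1, mixPX12 a b P1 P2 Q1 Q2 x1 x2 = 1 :=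
  sum_divOr (by simp only [mixPX1X2, mixPX2, sum_add_distrib, ← mul_sum, hQ1, hQ2, mul_one])
    (hQ1 x2)

lemma mixPV_sum [Fintype 𝒱₁] [Fintype 𝒱₂] (hab : a + b = 1)
    (hR1 : ∀ s x1 x2, ∑ v, R1 s x1 x2 v = 1) (hR2 : ∀ s x1 x2, ∑ v, R2 s x1 x2 v = 1)
    (s : 𝒮) (x1 : 𝒳₁) (x2 : 𝒳₂) : ∑ v, mixPV a b P1 P2 Q1 Q2 R1 R2 s x1 x2 v = 1 := by
  simp only [mixPV, Fintype.sum_sum_type, Sum.elim_inl, Sum.elim_inr, ← mul_sum, hR1, hR2,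
    mul_one]
  exact divOr_add_divOr rfl hab

lemma jointP_mix_comp_prodSumProdEquiv (QS : 𝒮 → ℝ) (W : 𝒴 → 𝒳₁ → 𝒳₂ → 𝒮 → ℝ)
    (ha : 0 ≤ a) (hb : 0 ≤ b) (hP1 : ∀ x2, 0 ≤ P1 x2)
    (hP2 : ∀ x2, 0 ≤ P2 x2) (hQ1 : ∀ x1 x2, 0 ≤ Q1 x1 x2) (hQ2 : ∀ x1 x2, 0 ≤ Q2 x1 x2) :
    jointP QS W (mixPX2 a b P1 P2) (mixPX12 a b P1 P2 Q1 Q2) (mixPV a b P1 P2 Q1 Q2 R1 R2)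
        ∘ prodSumProdEquiv 𝒮 𝒱₁ 𝒱₂ (𝒳₁ × 𝒳₂ × 𝒴)
      = Sum.elim (a • jointP QS W P1 Q1 R1) (b • jointP QS W P2 Q2 R2) := by
  have hu₁ : ∀ x2, 0 ≤ a * P1 x2 := fun x2 => mul_nonneg ha (hP1 x2)
  have hu₂ : ∀ x2, 0 ≤ b * P2 x2 := fun x2 => mul_nonneg hb (hP2 x2)
  have hw₁ : ∀ x1 x2, 0 ≤ a * P1 x2 * Q1 x1 x2 := fun x1 x2 => mul_nonneg (hu₁ x2) (hQ1 x1 x2)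
  have hw₂ : ∀ x1 x2, 0 ≤ b * P2 x2 * Q2 x1 x2 := fun x1 x2 => mul_nonneg (hu₂ x2) (hQ2 x1 x2)
  have hX : ∀ x1 x2, mixPX2 a b P1 P2 x2 * mixPX12 a b P1 P2 Q1 Q2 x1 x2
      = mixPX1X2 a b P1 P2 Q1 Q2 x1 x2 := fun x1 x2 => mul_divOr fun h => by
    obtain ⟨h₁, h₂⟩ := (add_eq_zero_iff_of_nonneg (hu₁ x2) (hu₂ x2)).1 h
    simp [mixPX1X2, h₁, h₂]
  have hV₁ : ∀ x1 x2, mixPX1X2 a b P1 P2 Q1 Q2 x1 x2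
      * divOr (a * P1 x2 * Q1 x1 x2) (mixPX1X2 a b P1 P2 Q1 Q2 x1 x2) a
      = a * P1 x2 * Q1 x1 x2 := fun x1 x2 =>
    mul_divOr fun h => ((add_eq_zero_iff_of_nonneg (hw₁ x1 x2) (hw₂ x1 x2)).1 h).1
  have hV₂ : ∀ x1 x2, mixPX1X2 a b P1 P2 Q1 Q2 x1 x2
      * divOr (b * P2 x2 * Q2 x1 x2) (mixPX1X2 a b P1 P2 Q1 Q2 x1 x2) b
      = b * P2 x2 * Q2 x1 x2 := fun x1 x2 =>
    mul_divOr fun h => ((add_eq_zero_iff_of_nonneg (hw₁ x1 x2) (hw₂ x1 x2)).1 h).2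
  funext ω
  rcases ω with ⟨s, v, x1, x2, y⟩ | ⟨s, v, x1, x2, y⟩
  · simp only [Function.comp_apply, prodSumProdEquiv_inl, jointP, mixPV, Sum.elim_inl,
      Pi.smul_apply, smul_eq_mul]
    linear_combination (QS s * R1 s x1 x2 v * W y x1 x2 s)
      * (divOr (a * P1 x2 * Q1 x1 x2) (mixPX1X2 a b P1 P2 Q1 Q2 x1 x2) a * hX x1 x2 + hV₁ x1 x2)
  · simp only [Function.comp_apply, prodSumProdEquiv_inr, jointP, mixPV, Sum.elim_inr,
      Pi.smul_apply, smul_eq_mul]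
    linear_combination (QS s * R2 s x1 x2 v * W y x1 x2 s)
      * (divOr (b * P2 x2 * Q2 x1 x2) (mixPX1X2 a b P1 P2 Q1 Q2 x1 x2) b * hX x1 x2 + hV₂ x1 x2)

end TimeSharing

lemma RoutW_sum {𝒮 𝒳₁ 𝒳₂ 𝒴 : Type*} [Fintype 𝒮] [Fintype 𝒳₁] [Fintype 𝒳₂] [Fintype 𝒴]
    {QS : 𝒮 → ℝ} {W : 𝒴 → 𝒳₁ → 𝒳₂ → 𝒮 → ℝ}
    (hQ0 : ∀ s, 0 ≤ QS s) (hQ1 : ∑ s, QS s = 1)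
    (hW0 : ∀ y x1 x2 s, 0 ≤ W y x1 x2 s) (hW1 : ∀ x1 x2 s, ∑ y, W y x1 x2 s = 1)
    {𝒱₁ 𝒱₂ : Type} [Fintype 𝒱₁] [Fintype 𝒱₂] {a b Rc₁ R₁ Rc₂ R₂ : ℝ}
    (ha : 0 ≤ a) (hb : 0 ≤ b) (hab : a + b = 1)
    (h₁ : RoutW QS W 𝒱₁ Rc₁ R₁) (h₂ : RoutW QS W 𝒱₂ Rc₂ R₂) :
    RoutW QS W (𝒱₁ ⊕ 𝒱₂) (a * Rc₁ + b * Rc₂) (a * R₁ + b * R₂) := by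
  obtain ⟨P₁, Q₁, V₁, hP₁, hP₁s, hQ₁, hQ₁s, hV₁, hV₁s, hc₁, hR₁, hRc₁⟩ := h₁
  obtain ⟨P₂, Q₂, V₂, hP₂, hP₂s, hQ₂, hQ₂s, hV₂, hV₂s, hc₂, hR₂, hRc₂⟩ := h₂
  have hm := jointP_mix_comp_prodSumProdEquiv (R1 := V₁) (R2 := V₂) QS W ha hb hP₁ hP₂ hQ₁ hQ₂
  have hp := isPMF_jointP hQ0 hQ1 hW0 hW1 hP₁ hP₁s hQ₁ hQ₁s hV₁ hV₁s
  have hq := isPMF_jointP hQ0 hQ1 hW0 hW1 hP₂ hP₂s hQ₂ hQ₂s hV₂ hV₂s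
  have hS : ∀ s, pr (jointP QS W P₁ Q₁ V₁) (fun ω => ω.1) s
      = pr (jointP QS W P₂ Q₂ V₂) (fun ω => ω.1) s := fun s =>
    (pr_jointP_fst hP₁s hQ₁s hV₁s hW1 s).trans (pr_jointP_fst hP₂s hQ₂s hV₂s hW1 s).symm
  refine ⟨mixPX2 a b P₁ P₂, mixPX12 a b P₁ P₂ Q₁ Q₂, mixPV a b P₁ P₂ Q₁ Q₂ V₁ V₂,
    mixPX2_nonneg ha hb hP₁ hP₂, mixPX2_sum hab hP₁s hP₂s,
    mixPX12_nonneg ha hb hP₁ hP₂ hQ₁ hQ₂, mixPX12_sum hQ₁s hQ₂s,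
    mixPV_nonneg ha hb hP₁ hP₂ hQ₁ hQ₂ hV₁ hV₂, mixPV_sum hab hV₁s hV₂s, ?_, ?_, ?_⟩
  · exact (add_nonneg (mul_nonneg ha hc₁) (mul_nonneg hb hc₂)).trans
      (mi_sub_mi_of_mixture_ge hm hp hq ha hb hab (fun ω => (ω.2.1, ω.2.2.2.1))
        (fun ω => ω.2.2.2.2) (fun ω => ω.1) (fun ω => (ω.2.1, ω.2.2.2.1))
        (fun ω => (ω.2.1, ω.2.2.2.1)) (by simp) (by simp) (by simp) hS)
  · refine (add_le_add (mul_le_mul_of_nonneg_left hR₁ ha)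
      (mul_le_mul_of_nonneg_left hR₂ hb)).trans_eq (cmi_of_mixture hm hp.2 hq.2 (fun ω => ω.2.2.1)
        (fun ω => ω.2.2.2.2) (fun ω => (ω.2.1, ω.2.2.2.1)) (fun ω => (ω.2.1, ω.2.2.2.1))
        (fun ω => (ω.2.1, ω.2.2.2.1)) (by simp) (by simp) (by simp)).symm
  · calc a * Rc₁ + b * Rc₂ + (a * R₁ + b * R₂) = a * (Rc₁ + R₁) + b * (Rc₂ + R₂) := by ring
      _ ≤ _ := add_le_add (mul_le_mul_of_nonneg_left hRc₁ ha) (mul_le_mul_of_nonneg_left hRc₂ hb)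
      _ ≤ _ := mi_sub_mi_of_mixture_ge hm hp hq ha hb hab
        (fun ω => (ω.2.1, ω.2.2.1, ω.2.2.2.1)) (fun ω => ω.2.2.2.2) (fun ω => ω.1)
        (fun ω => (ω.2.1, ω.2.2.1, ω.2.2.2.1)) (fun ω => (ω.2.1, ω.2.2.1, ω.2.2.2.1))
        (by simp) (by simp) (by simp) hS

/-- **Proposition 2, part 1:** the outer bound region `R^out` is convex. -/
theorem Rout_convex {𝒮 𝒳₁ 𝒳₂ 𝒴 : Type*} [Fintype 𝒮] [Fintype 𝒳₁] [Fintype 𝒳₂] [Fintype 𝒴]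
    (QS : 𝒮 → ℝ) (W : 𝒴 → 𝒳₁ → 𝒳₂ → 𝒮 → ℝ)
    (hQ0 : ∀ s, 0 ≤ QS s) (hQ1 : ∑ s, QS s = 1)
    (hW0 : ∀ y x1 x2 s, 0 ≤ W y x1 x2 s) (hW1 : ∀ x1 x2 s, ∑ y, W y x1 x2 s = 1) :
    Convex ℝ (Rout QS W) := by
  rintro ⟨Rc₁, R₁⟩ ⟨hRc₁, hR₁, 𝒱₁, _, h₁⟩ ⟨Rc₂, R₂⟩ ⟨hRc₂, hR₂, 𝒱₂, _, h₂⟩ a b ha hb hab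
  exact ⟨by simp only [Prod.smul_mk, Prod.mk_add_mk, smul_eq_mul]; positivity,
    by simp only [Prod.smul_mk, Prod.mk_add_mk, smul_eq_mul]; positivity,
    𝒱₁ ⊕ 𝒱₂, inferInstance, RoutW_sum hQ0 hQ1 hW0 hW1 ha hb hab h₁ h₂⟩
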